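/- arXiv:1702.06775 — 3 statements merged into one kernel-verified Lean document; each statement's English description precedes it below -/
import Mathlib

section
/- Let K ⊆ L be a field extension and let G be a group. If V is a finite-dimensional K-linear representation of G such that the scalar extension L ⊗_K V is a semisimple L[G]-module, then V is a semisimple K[G]-module. -/
/-!
A subrepresentation `W ⊆ V` has a `G`-stable complement as soon as there is a `G`-equivariant
projection of `V` onto `W`. Semisimplicity of `L ⊗ V` provides an equivariant `L`-linear
projection `F` onto `L ⊗ W`. For a `K`-linear functional `φ : L → K` with `φ 1 = 1`, the map
`v ↦ (φ ⊗ id) (F (1 ⊗ v))` is then a `K`-linear, `G`-equivariant projection of `V` onto `W`: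
it lands in `W` because `φ ⊗ id` maps `L ⊗ W` into `W`, and it fixes `W` because `F` fixes `1 ⊗ w`.
-/

open TensorProduct

/-- The base change of a representation `ρ : G → GL_K(V)` along a field
extension `K ⊆ L`, acting on `L ⊗[K] V`. -/
noncomputable def repBaseChange {K L G V : Type*} [Field K] [Field L]
    [Algebra K L] [Group G] [AddCommGroup V] [Module K V]
    (ρ : Representation K G V) : Representation L G (L ⊗[K] V) where
  toFun g := (ρ g).baseChange L
  map_one' := by ext; simp
  map_mul' g h := by ext; simp

namespace Subrepresentation

section CommSemiring

variable {k G V : Type*} [CommSemiring k] [Monoid G] [AddCommMonoid V] [Module k V]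
  {ρ : Representation k G V}

theorem isCompl_toSubmodule_iff {σ τ : Subrepresentation ρ} :
    IsCompl σ.toSubmodule τ.toSubmodule ↔ IsCompl σ τ := by
  have hbot : (⊥ : Subrepresentation ρ).toSubmodule = ⊥ := rfl
  have htop : (⊤ : Subrepresentation ρ).toSubmodule = ⊤ := rfl
  simp only [isCompl_iff, disjoint_iff, codisjoint_iff, ← toSubmodule_inf, ← toSubmodule_sup,
    ← hbot, ← htop, toSubmodule_injective.eq_iff]

end CommSemiring

variable {k G V : Type*} [CommRing k] [Monoid G] [AddCommGroup V] [Module k V]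
  {ρ : Representation k G V}

theorem exists_isCompl_iff (σ : Subrepresentation ρ) :
    (∃ τ, IsCompl σ τ) ↔
      ∃ f : V →ₗ[k] V, LinearMap.IsProj σ.toSubmodule f ∧ ∀ g, Commute f (ρ g) := by
  constructor
  · rintro ⟨τ, hστ⟩
    have hcompl := isCompl_toSubmodule_iff.mpr hστ
    refine ⟨_, ⟨Submodule.projection_apply_mem hcompl,
      fun _ ↦ Submodule.projection_apply_of_mem_left hcompl⟩, fun g ↦ ?_⟩
    rw [LinearMap.IsIdempotentElem.commute_iff (Submodule.isIdempotentElem_projection hcompl),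
      Submodule.range_projection, Submodule.ker_projection]
    exact ⟨fun v hv ↦ σ.apply_mem_toSubmodule g hv, fun v hv ↦ τ.apply_mem_toSubmodule g hv⟩
  · rintro ⟨f, hf, hfρ⟩
    refine ⟨⟨LinearMap.ker f, fun g v hv ↦ ?_⟩, isCompl_toSubmodule_iff.mp hf.isCompl⟩
    rw [LinearMap.mem_ker, ← Module.End.mul_apply, (hfρ g).eq, Module.End.mul_apply,
      LinearMap.mem_ker.mp hv, map_zero]

end Subrepresentation

theorem Submodule.baseChange_le_comap_baseChange {R A M N : Type*} [CommSemiring R] [Semiring A]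
    [Algebra R A] [AddCommMonoid M] [Module R M] [AddCommMonoid N] [Module R N]
    {p : Submodule R M} {q : Submodule R N} {u : M →ₗ[R] N} (h : p ≤ q.comap u) :
    p.baseChange A ≤ (q.baseChange A).comap (u.baseChange A) := by
  rw [Submodule.baseChange_eq_span, Submodule.span_le]
  rintro _ ⟨m, hm, rfl⟩
  exact Submodule.tmul_mem_baseChange_of_mem 1 (h hm)

namespace LinearMap

variable {K L M N : Type*} [CommSemiring K] [Semiring L] [Algebra K L]
  [AddCommMonoid M] [Module K M] [AddCommMonoid N] [Module K N] (φ : L →ₗ[K] K)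

theorem lid_rTensor_baseChange (u : M →ₗ[K] N) (x : L ⊗[K] M) :
    TensorProduct.lid K N (φ.rTensor N (u.baseChange L x)) =
      u (TensorProduct.lid K M (φ.rTensor M x)) := by
  induction x using TensorProduct.induction_on with
  | zero => simp
  | tmul l m => simp
  | add x y hx hy => simp only [map_add, hx, hy]

noncomputable def descend (F : L ⊗[K] M →ₗ[L] L ⊗[K] M) : M →ₗ[K] M :=
  TensorProduct.lid K M ∘ₗ φ.rTensor M ∘ₗ F.restrictScalars K ∘ₗ TensorProduct.mk K L M 1

theorem descend_apply (F : L ⊗[K] M →ₗ[L] L ⊗[K] M) (v : M) :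
    φ.descend F v = TensorProduct.lid K M (φ.rTensor M (F (1 ⊗ₜ v))) :=
  rfl

variable {φ}

theorem IsProj.descend {p : Submodule K M} {F : L ⊗[K] M →ₗ[L] L ⊗[K] M} (hφ : φ 1 = 1)
    (hF : IsProj (p.baseChange L) F) : IsProj p (φ.descend F) where
  map_mem v := by
    obtain ⟨y, hy⟩ := hF.map_mem (1 ⊗ₜ v)
    rw [descend_apply, ← hy, lid_rTensor_baseChange]
    exact Submodule.coe_mem _
  map_id v hv := by
    rw [descend_apply, hF.map_id _ (Submodule.tmul_mem_baseChange_of_mem 1 hv), rTensor_tmul, hφ,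
      TensorProduct.lid_tmul, one_smul]

theorem commute_descend {F : L ⊗[K] M →ₗ[L] L ⊗[K] M} {u : M →ₗ[K] M}
    (h : Commute F (u.baseChange L)) : Commute (φ.descend F) u := by
  ext v
  have hF : F (1 ⊗ₜ u v) = u.baseChange L (F (1 ⊗ₜ v)) := by
    simpa using LinearMap.congr_fun h.eq (1 ⊗ₜ v)
  simp only [Module.End.mul_apply, descend_apply, hF, lid_rTensor_baseChange]

end LinearMap

namespace Subrepresentation

variable {K L G V : Type*} [Field K] [Field L] [Algebra K L] [Group G] [AddCommGroup V]
  [Module K V] {ρ : Representation K G V}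

variable (L) in
def baseChange (σ : Subrepresentation ρ) : Subrepresentation (repBaseChange (L := L) ρ) where
  toSubmodule := σ.toSubmodule.baseChange L
  apply_mem_toSubmodule g :=
    Submodule.baseChange_le_comap_baseChange fun _ hv ↦ σ.apply_mem_toSubmodule g hv

end Subrepresentation

theorem isSemisimple_of_baseChange_isSemisimple_general (K L : Type*) [Field K] [Field L]
    [Algebra K L] (G : Type*) [Group G]
    (V : Type*) [AddCommGroup V] [Module K V]
    (ρ : Representation K G V)
    (h : IsSemisimpleModule (MonoidAlgebra L G)
      (Representation.asModule (repBaseChange (L := L) ρ))) :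
    IsSemisimpleModule (MonoidAlgebra K G) ρ.asModule := by
  rw [← Representation.isSemisimpleRepresentation_iff_isSemisimpleModule_asModule] at h ⊢
  obtain ⟨φ, hφ⟩ := (Algebra.linearMap K L).exists_leftInverse_of_injective
    (LinearMap.ker_eq_bot.mpr (algebraMap K L).injective)
  have hφ1 : φ 1 = 1 := by simpa using LinearMap.congr_fun hφ 1
  refine ⟨fun σ ↦ σ.exists_isCompl_iff.mpr ?_⟩
  obtain ⟨F, hF, hFρ⟩ := (σ.baseChange L).exists_isCompl_iff.mp (exists_isCompl _)
  exact ⟨φ.descend F, hF.descend hφ1, fun g ↦ LinearMap.commute_descend (hFρ g)⟩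

/-- Descent of semisimplicity along a field extension: if `L ⊗_K V` is a
semisimple `L[G]`-module, then the finite-dimensional representation `V` is a
semisimple `K[G]`-module. -/
theorem isSemisimple_of_baseChange_isSemisimple (K L : Type*) [Field K] [Field L]
    [Algebra K L] (G : Type*) [Group G]
    (V : Type*) [AddCommGroup V] [Module K V] [FiniteDimensional K V]
    (ρ : Representation K G V)
    (h : IsSemisimpleModule (MonoidAlgebra L G)
      (Representation.asModule (repBaseChange (L := L) ρ))) :
    IsSemisimpleModule (MonoidAlgebra K G) ρ.asModule :=
  isSemisimple_of_baseChange_isSemisimple_general K L G V ρ h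
end

section
/- Let K ⊆ L be fields and let 0 → V' → V → V'' → 0 be a short exact sequence of modules over a K-algebra A. If the extension splits after applying L ⊗_K (−), i.e., the sequence of L ⊗_K A-modules 0 → L⊗V' → L⊗V → L⊗V'' → 0 splits, and V'' is finitely presented, then the original sequence splits over A. -/
/-!
A `K`-linear functional `φ : L → K` with `φ 1 = 1` induces, for every `K`-module `M`, a `K`-linear
retraction `π : L ⊗[K] M → M`, `l ⊗ m ↦ φ l • m`, natural in `M`. If `s` is an `A`-compatible
section of `L ⊗ g`, naturality of `π` makes `n ↦ π (s (1 ⊗ n))` an `A`-linear section of `g`,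
and a section of `g` gives a retraction of `f` by the splitting lemma.
-/

open TensorProduct

section

variable {K : Type*} [CommSemiring K] {L : Type*} [CommSemiring L] [Algebra K L]
  {M N : Type*} [AddCommMonoid M] [Module K M] [AddCommMonoid N] [Module K N]

theorem lid_comp_rTensor_comp_baseChange (φ : L →ₗ[K] K) (h : M →ₗ[K] N) :
    TensorProduct.lid K N ∘ₗ φ.rTensor N ∘ₗ (h.baseChange L).restrictScalars K
      = h ∘ₗ TensorProduct.lid K M ∘ₗ φ.rTensor M := by
  ext l m
  simp

variable {A : Type*} [Semiring A] [Algebra K A]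
  [Module A M] [IsScalarTower K A M] [SMulCommClass A K M]
  [Module A N] [IsScalarTower K A N] [SMulCommClass A K N]

theorem LinearMap.exists_comp_eq_id_of_baseChange (g : M →ₗ[A] N)
    (φ : L →ₗ[K] K) (hφ : φ 1 = 1) (s : L ⊗[K] N →ₗ[L] L ⊗[K] M)
    (hs : (g.restrictScalars K).baseChange L ∘ₗ s = LinearMap.id)
    (hsA : ∀ a : A, s ∘ₗ (Module.toModuleEnd K N a).baseChange L
      = (Module.toModuleEnd K M a).baseChange L ∘ₗ s) :
    ∃ σ : N →ₗ[A] M, g ∘ₗ σ = LinearMap.id := by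
  let π : L ⊗[K] M →ₗ[K] M := TensorProduct.lid K M ∘ₗ φ.rTensor M
  have π_natural (h : M →ₗ[K] M) (x : L ⊗[K] M) : π (h.baseChange L x) = h (π x) :=
    LinearMap.congr_fun (lid_comp_rTensor_comp_baseChange φ h) x
  let σ : N →ₗ[K] M := π ∘ₗ s.restrictScalars K ∘ₗ TensorProduct.mk K L N 1
  have σ_smul (a : A) (n : N) : σ (a • n) = a • σ n :=
    calc π (s (1 ⊗ₜ (a • n)))
        = π (s ((Module.toModuleEnd K N a).baseChange L (1 ⊗ₜ n))) := rfl
      _ = π ((Module.toModuleEnd K M a).baseChange L (s (1 ⊗ₜ n))) :=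
        congrArg π (LinearMap.congr_fun (hsA a) _)
      _ = a • σ n := π_natural _ _
  refine ⟨{ σ with map_smul' := σ_smul }, LinearMap.ext fun n ↦ ?_⟩
  calc g (π (s (1 ⊗ₜ n)))
      = TensorProduct.lid K N (φ.rTensor N ((g.restrictScalars K).baseChange L (s (1 ⊗ₜ n)))) :=
        (LinearMap.congr_fun (lid_comp_rTensor_comp_baseChange φ (g.restrictScalars K)) _).symm
    _ = n := by rw [← LinearMap.comp_apply _ s, hs]; simp [hφ]

end

theorem splits_of_baseChange_splits_general
    (K L : Type*) [Field K] [Field L] [Algebra K L]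
    (A : Type*) [Ring A] [Algebra K A]
    (V' V V'' : Type*)
    [AddCommGroup V'] [Module A V']
    [AddCommGroup V] [Module K V] [Module A V] [IsScalarTower K A V]
    [SMulCommClass A K V]
    [AddCommGroup V''] [Module K V''] [Module A V''] [IsScalarTower K A V'']
    [SMulCommClass A K V'']
    (f : V' →ₗ[A] V) (g : V →ₗ[A] V'')
    (hf : Function.Injective f)
    (hexact : Function.Exact f g)
    (hsplit : ∃ s : L ⊗[K] V'' →ₗ[L] L ⊗[K] V,
      ((g.restrictScalars K).baseChange L) ∘ₗ s = LinearMap.id ∧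
      ∀ a : A, s ∘ₗ (Module.toModuleEnd K V'' a).baseChange L
        = ((Module.toModuleEnd K V a).baseChange L) ∘ₗ s) :
    ∃ r : V →ₗ[A] V', r ∘ₗ f = LinearMap.id := by
  obtain ⟨s, hs, hsA⟩ := hsplit
  obtain ⟨φ, hφ⟩ := Module.Projective.exists_dual_eq_one K (one_ne_zero : (1 : L) ≠ 0)
  obtain ⟨σ, hσ⟩ := g.exists_comp_eq_id_of_baseChange φ hφ s hs hsA
  have split := hexact.split_tfae'.out 0 1
  exact (split.mp ⟨hf, σ, hσ⟩).2

/-- Descent of splittings along a field extension `K ⊆ L`: a short exact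
sequence `0 → V' → V → V'' → 0` of modules over a `K`-algebra `A`, with `V''`
finitely presented, splits over `A` provided it splits after applying
`L ⊗[K] (−)` (compatibly with the `A`-actions). -/
theorem splits_of_baseChange_splits
    (K L : Type*) [Field K] [Field L] [Algebra K L]
    (A : Type*) [Ring A] [Algebra K A]
    (V' V V'' : Type*)
    [AddCommGroup V'] [Module K V'] [Module A V'] [IsScalarTower K A V']
    [SMulCommClass A K V']
    [AddCommGroup V] [Module K V] [Module A V] [IsScalarTower K A V]
    [SMulCommClass A K V]
    [AddCommGroup V''] [Module K V''] [Module A V''] [IsScalarTower K A V'']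
    [SMulCommClass A K V'']
    (f : V' →ₗ[A] V) (g : V →ₗ[A] V'')
    (hf : Function.Injective f) (hg : Function.Surjective g)
    (hexact : Function.Exact f g)
    (hfp : Module.FinitePresentation A V'')
    (hsplit : ∃ s : L ⊗[K] V'' →ₗ[L] L ⊗[K] V,
      ((g.restrictScalars K).baseChange L) ∘ₗ s = LinearMap.id ∧
      ∀ a : A, s ∘ₗ (Module.toModuleEnd K V'' a).baseChange L
        = ((Module.toModuleEnd K V a).baseChange L) ∘ₗ s) :
    ∃ r : V →ₗ[A] V', r ∘ₗ f = LinearMap.id :=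
  splits_of_baseChange_splits_general K L A V' V V'' f g hf hexact hsplit
end

section
/- Let G be a group, K ⊆ L fields, and V', V'' finite-dimensional K-representations of G. The natural map L ⊗_K Ext¹_{K[G]}(V'', V') → Ext¹_{L[G]}(L ⊗ V'', L ⊗ V') is injective; hence a K[G]-extension of V'' by V' that splits after base change to L splits over K. -/
open TensorProduct

/-!
A `K`-linear functional `λ : L → K` with `λ 1 = 1` (it exists since `L` is a nonzero `K`-vector
space) turns an `L`-linear map `s : L ⊗ M → L ⊗ N` into the `K`-linear map
`m ↦ (λ ⊗ id) (s (1 ⊗ m))`. This descent is natural in `M` and `N` for maps coming from `K` and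
sends the identity to the identity, so it carries an `L[G]`-equivariant section of `L ⊗ g` to a
`K[G]`-equivariant section of `g`.
-/

namespace LinearMap

variable {R A M N P : Type*} [CommSemiring R] [Semiring A] [Algebra R A]
  [AddCommMonoid M] [AddCommMonoid N] [AddCommMonoid P] [Module R M] [Module R N] [Module R P]

noncomputable def descendBaseChange (lam : A →ₗ[R] R) (s : A ⊗[R] M →ₗ[A] A ⊗[R] N) :
    M →ₗ[R] N :=
  (TensorProduct.lid R N).toLinearMap ∘ₗ lam.rTensor N ∘ₗ s.restrictScalars R ∘ₗ
    TensorProduct.mk R A M 1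

variable (lam : A →ₗ[R] R)

theorem descendBaseChange_comp_baseChange (s : A ⊗[R] M →ₗ[A] A ⊗[R] N) (h : P →ₗ[R] M) :
    descendBaseChange lam (s ∘ₗ h.baseChange A) = descendBaseChange lam s ∘ₗ h :=
  rfl

theorem descendBaseChange_baseChange_comp (h : N →ₗ[R] P) (s : A ⊗[R] M →ₗ[A] A ⊗[R] N) :
    descendBaseChange lam (h.baseChange A ∘ₗ s) = h ∘ₗ descendBaseChange lam s := by
  have hnat : (TensorProduct.lid R P).toLinearMap ∘ₗ lam.rTensor P ∘ₗ
      (h.baseChange A).restrictScalars R =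
      h ∘ₗ (TensorProduct.lid R N).toLinearMap ∘ₗ lam.rTensor N := by
    ext a n
    simp
  ext m
  exact LinearMap.congr_fun hnat (s (1 ⊗ₜ m))

theorem descendBaseChange_id (hlam : lam 1 = 1) :
    descendBaseChange lam (LinearMap.id : A ⊗[R] M →ₗ[A] A ⊗[R] M) = LinearMap.id := by
  ext m
  simp [descendBaseChange, hlam]

end LinearMap

theorem repBaseChange_apply {K L G V : Type*} [Field K] [Field L] [Algebra K L] [Group G]
    [AddCommGroup V] [Module K V] (ρ : Representation K G V) (x : G) :
    repBaseChange (L := L) ρ x = (ρ x).baseChange L :=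
  rfl

theorem rep_extension_splits_of_baseChange_splits_general
    (K L : Type*) [Field K] [Field L] [Algebra K L] (G : Type*) [Group G]
    (V V'' : Type*)
    [AddCommGroup V] [Module K V]
    [AddCommGroup V''] [Module K V'']
    (ρ : Representation K G V)
    (ρ'' : Representation K G V'')
    (g : V →ₗ[K] V'')
    (hsplit : ∃ s : L ⊗[K] V'' →ₗ[L] L ⊗[K] V,
      (g.baseChange L) ∘ₗ s = LinearMap.id ∧
      ∀ x : G, s ∘ₗ repBaseChange (L := L) ρ'' x = repBaseChange (L := L) ρ x ∘ₗ s) :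
    ∃ s : V'' →ₗ[K] V, g ∘ₗ s = LinearMap.id ∧ ∀ x : G, s ∘ₗ ρ'' x = ρ x ∘ₗ s := by
  obtain ⟨s, hs_section, hs_equivariant⟩ := hsplit
  obtain ⟨lam, hlam⟩ : ∃ lam : L →ₗ[K] K, lam 1 = 1 :=
    Module.Projective.exists_dual_eq_one K one_ne_zero
  refine ⟨LinearMap.descendBaseChange lam s, ?_, fun x => ?_⟩
  · rw [← LinearMap.descendBaseChange_baseChange_comp, hs_section,
      LinearMap.descendBaseChange_id lam hlam]
  · have := congrArg (LinearMap.descendBaseChange lam) (hs_equivariant x)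
    rwa [repBaseChange_apply, repBaseChange_apply, LinearMap.descendBaseChange_comp_baseChange,
      LinearMap.descendBaseChange_baseChange_comp] at this

/-- Injectivity of `L ⊗_K Ext¹_{K[G]}(V'', V') → Ext¹_{L[G]}(L ⊗ V'', L ⊗ V')`,
stated concretely on extension classes: a `K[G]`-extension
`0 → V' → V → V'' → 0` of finite-dimensional representations that splits after
base change to `L` already splits over `K`. -/
theorem rep_extension_splits_of_baseChange_splits
    (K L : Type*) [Field K] [Field L] [Algebra K L] (G : Type*) [Group G]
    (V' V V'' : Type*) [AddCommGroup V'] [Module K V'] [FiniteDimensional K V']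
    [AddCommGroup V] [Module K V]
    [AddCommGroup V''] [Module K V''] [FiniteDimensional K V'']
    (ρ' : Representation K G V') (ρ : Representation K G V)
    (ρ'' : Representation K G V'')
    (f : V' →ₗ[K] V) (g : V →ₗ[K] V'')
    (hf : Function.Injective f) (hg : Function.Surjective g)
    (hexact : Function.Exact f g)
    (hfequiv : ∀ x : G, f ∘ₗ ρ' x = ρ x ∘ₗ f)
    (hgequiv : ∀ x : G, g ∘ₗ ρ x = ρ'' x ∘ₗ g)
    (hsplit : ∃ s : L ⊗[K] V'' →ₗ[L] L ⊗[K] V,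
      (g.baseChange L) ∘ₗ s = LinearMap.id ∧
      ∀ x : G, s ∘ₗ repBaseChange (L := L) ρ'' x = repBaseChange (L := L) ρ x ∘ₗ s) :
    ∃ s : V'' →ₗ[K] V, g ∘ₗ s = LinearMap.id ∧ ∀ x : G, s ∘ₗ ρ'' x = ρ x ∘ₗ s :=
  rep_extension_splits_of_baseChange_splits_general K L G V V'' ρ ρ'' g hsplit
end
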